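/- arXiv:1607.04785 — 4 statements merged into one kernel-verified Lean document; each statement's English description precedes it below -/
import Mathlib

section
/- Let X be a random vector in ℝⁿ, M an independent standard Gaussian, σ > 0, and f the density of X + σM. Then there exist constants a, b > 0 (depending only on n and σ) such that |∂ᵢf(x)| ≤ f(x) · a · (1 + |log(b f(x))|^{1/2}) for every x ∈ ℝⁿ and every coordinate direction i. -/
open MeasureTheory Real

/-!
Differentiating under the integral, `∇f(x) = σ⁻² ∫ (z - x) φ(x - z) dμ(z)`, so `|∇f(x)|` is at
most `σ⁻²` times the first moment `∫ |x - z| φ(x - z) dμ(z)`. Split that moment at a radius `R`: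
near `x` it is at most `R f(x)`, while for `t ≥ R` the bound
`t e^{-t²/2σ²} = (t e^{-t²/4σ²}) e^{-t²/4σ²} ≤ σ e^{-R²/4σ²}` bounds the rest by `σ e^{-R²/4σ²}`
times the peak `K = (2πσ²)^{-n/2}` of `φ`. Since `f ≤ K`, the choice
`R = 2σ √(log (K / f(x)))` makes this tail equal to `σ f(x)`, whence
`|∇f(x)| ≤ f(x) (1 + 2 √|log (f(x) / K)|) / σ`.
-/

lemma mul_exp_neg_sq_div_le {σ : ℝ} (hσ : 0 < σ) (t : ℝ) :
    t * exp (-t ^ 2 / (4 * σ ^ 2)) ≤ σ := by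
  have hle : t ≤ σ * exp (t ^ 2 / (4 * σ ^ 2)) := by
    have hamgm : t ≤ σ * (t ^ 2 / (4 * σ ^ 2) + 1) := by
      rw [mul_add, mul_one, mul_div_assoc', div_add' _ _ _ (by positivity),
        le_div_iff₀ (by positivity)]
      nlinarith [sq_nonneg (t - 2 * σ)]
    exact hamgm.trans (mul_le_mul_of_nonneg_left (add_one_le_exp _) hσ.le)
  calc t * exp (-t ^ 2 / (4 * σ ^ 2))
      ≤ σ * exp (t ^ 2 / (4 * σ ^ 2)) * exp (-t ^ 2 / (4 * σ ^ 2)) :=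
        mul_le_mul_of_nonneg_right hle (exp_pos _).le
    _ = σ := by rw [mul_assoc, ← exp_add, neg_div, add_neg_cancel, exp_zero, mul_one]

lemma mul_exp_neg_sq_le_add {σ R : ℝ} (hσ : 0 < σ) (hR : 0 ≤ R) (t : ℝ) :
    t * exp (-t ^ 2 / (2 * σ ^ 2)) ≤
      R * exp (-t ^ 2 / (2 * σ ^ 2)) + σ * exp (-R ^ 2 / (4 * σ ^ 2)) := by
  rcases le_or_gt t R with htR | hRt
  · have hnear := mul_le_mul_of_nonneg_right htR (exp_pos (-t ^ 2 / (2 * σ ^ 2))).le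
    have htail : 0 ≤ σ * exp (-R ^ 2 / (4 * σ ^ 2)) := by positivity
    linarith
  · have hsplit : exp (-t ^ 2 / (2 * σ ^ 2)) =
        exp (-t ^ 2 / (4 * σ ^ 2)) * exp (-t ^ 2 / (4 * σ ^ 2)) := by
      rw [← exp_add]; congr 1; field_simp; ring
    have htail : exp (-t ^ 2 / (4 * σ ^ 2)) ≤ exp (-R ^ 2 / (4 * σ ^ 2)) := by gcongr
    calc t * exp (-t ^ 2 / (2 * σ ^ 2))
        = t * exp (-t ^ 2 / (4 * σ ^ 2)) * exp (-t ^ 2 / (4 * σ ^ 2)) := by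
          rw [hsplit, mul_assoc]
      _ ≤ σ * exp (-R ^ 2 / (4 * σ ^ 2)) := by
        gcongr
        exact mul_exp_neg_sq_div_le hσ t
      _ ≤ _ := le_add_of_nonneg_left (by positivity)

noncomputable section

variable {E : Type*} [NormedAddCommGroup E]

-- Unnormalized: the density of `N(0, σ² I)` on `ℝⁿ` is `(2πσ²)^{-n/2} • gaussianKernel σ`.
def gaussianKernel (σ : ℝ) (v : E) : ℝ := exp (-‖v‖ ^ 2 / (2 * σ ^ 2))

def gaussianSmoothing [MeasurableSpace E] (μ : Measure E) (σ : ℝ) (x : E) : ℝ :=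
  ∫ z, gaussianKernel σ (x - z) ∂μ

lemma gaussianKernel_pos (σ : ℝ) (v : E) : 0 < gaussianKernel σ v := exp_pos _

lemma gaussianKernel_le_one (σ : ℝ) (v : E) : gaussianKernel σ v ≤ 1 :=
  exp_le_one_iff.mpr (div_nonpos_of_nonpos_of_nonneg (by simp) (by positivity))

@[fun_prop]
lemma continuous_gaussianKernel (σ : ℝ) : Continuous (gaussianKernel (E := E) σ) := by
  unfold gaussianKernel; fun_prop

lemma norm_mul_gaussianKernel_le {σ : ℝ} (hσ : 0 < σ) (v : E) :
    ‖v‖ * gaussianKernel σ v ≤ σ := by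
  simpa [gaussianKernel] using mul_exp_neg_sq_le_add hσ le_rfl ‖v‖

section Measure

variable [MeasurableSpace E] [OpensMeasurableSpace E] {μ : Measure E}

lemma integrable_gaussianKernel_sub [IsFiniteMeasure μ] (σ : ℝ) (x : E) :
    Integrable (fun z ↦ gaussianKernel σ (x - z)) μ := by
  refine .of_bound ?_ 1 (.of_forall fun z ↦ ?_)
  · exact ((continuous_gaussianKernel σ).comp (continuous_sub_left x)).aestronglyMeasurable
  · rw [Real.norm_of_nonneg (gaussianKernel_pos σ _).le]
    exact gaussianKernel_le_one σ _

lemma gaussianSmoothing_pos [IsFiniteMeasure μ] [NeZero μ] (σ : ℝ) (x : E) :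
    0 < gaussianSmoothing μ σ x :=
  integral_exp_pos (integrable_gaussianKernel_sub σ x)

lemma gaussianSmoothing_le_one [IsProbabilityMeasure μ] (σ : ℝ) (x : E) :
    gaussianSmoothing μ σ x ≤ 1 := by
  calc gaussianSmoothing μ σ x ≤ ∫ _, (1 : ℝ) ∂μ :=
        integral_mono (integrable_gaussianKernel_sub σ x) (integrable_const 1)
          fun z ↦ gaussianKernel_le_one σ _
    _ = 1 := by simp

lemma integral_norm_mul_gaussianKernel_le [IsProbabilityMeasure μ] {σ R : ℝ} (hσ : 0 < σ)
    (hR : 0 ≤ R) (x : E) :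
    ∫ z, ‖x - z‖ * gaussianKernel σ (x - z) ∂μ ≤
      R * gaussianSmoothing μ σ x + σ * exp (-R ^ 2 / (4 * σ ^ 2)) := by
  have hint := integrable_gaussianKernel_sub (μ := μ) σ x
  calc ∫ z, ‖x - z‖ * gaussianKernel σ (x - z) ∂μ
      ≤ ∫ z, (R * gaussianKernel σ (x - z) + σ * exp (-R ^ 2 / (4 * σ ^ 2))) ∂μ :=
        integral_mono_of_nonneg
          (.of_forall fun z ↦ mul_nonneg (norm_nonneg _) (gaussianKernel_pos σ _).le)
          ((hint.const_mul R).add (integrable_const _))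
          (.of_forall fun z ↦ mul_exp_neg_sq_le_add hσ hR ‖x - z‖)
    _ = R * gaussianSmoothing μ σ x + σ * exp (-R ^ 2 / (4 * σ ^ 2)) := by
        rw [integral_add (hint.const_mul R) (integrable_const _), integral_const_mul]
        simp [gaussianSmoothing]

end Measure

section InnerProduct

variable [InnerProductSpace ℝ E]

lemma hasFDerivAt_gaussianKernel (σ : ℝ) (v : E) :
    HasFDerivAt (gaussianKernel σ) (-(gaussianKernel σ v / σ ^ 2) • innerSL ℝ v) v := by
  have hform : gaussianKernel σ = fun w : E ↦ exp (‖w‖ ^ 2 * -(2 * σ ^ 2)⁻¹) := by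
    funext w
    rw [gaussianKernel, div_eq_mul_inv, neg_mul, mul_neg]
  rw [hform]
  convert ((hasStrictFDerivAt_norm_sq v).hasFDerivAt.mul_const (-(2 * σ ^ 2)⁻¹)).exp using 1
  ext w
  simp only [smul_apply, add_apply, neg_apply, coe_innerSL_apply, smul_eq_mul, two_smul,
    neg_smul, smul_add]
  ring

lemma norm_gaussianKernel_fderiv (σ : ℝ) (v : E) :
    ‖-(gaussianKernel σ v / σ ^ 2) • innerSL ℝ v‖ = ‖v‖ * gaussianKernel σ v / σ ^ 2 := by
  rw [norm_smul, innerSL_apply_norm, norm_neg, norm_div, norm_pow, Real.norm_eq_abs,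
    Real.norm_eq_abs, abs_of_pos (gaussianKernel_pos σ v), sq_abs]
  ring

lemma norm_gaussianKernel_fderiv_le {σ : ℝ} (hσ : 0 < σ) (v : E) :
    ‖-(gaussianKernel σ v / σ ^ 2) • innerSL ℝ v‖ ≤ 1 / σ := by
  rw [norm_gaussianKernel_fderiv, div_le_div_iff₀ (by positivity) hσ]
  nlinarith [norm_mul_gaussianKernel_le hσ v]

variable [MeasurableSpace E] [OpensMeasurableSpace E] [SecondCountableTopology E]
  {μ : Measure E}

lemma hasFDerivAt_gaussianSmoothing [IsFiniteMeasure μ] {σ : ℝ} (hσ : 0 < σ) (x : E) :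
    HasFDerivAt (gaussianSmoothing μ σ)
      (∫ z, -(gaussianKernel σ (x - z) / σ ^ 2) • innerSL ℝ (x - z) ∂μ) x := by
  refine hasFDerivAt_integral_of_dominated_of_fderiv_le (bound := fun _ ↦ 1 / σ) Filter.univ_mem
    (.of_forall fun y ↦ by fun_prop) (integrable_gaussianKernel_sub σ x) (by fun_prop)
    (.of_forall fun z y _ ↦ norm_gaussianKernel_fderiv_le hσ (y - z)) (integrable_const _)
    (.of_forall fun z y _ ↦ ?_)
  simpa only [Function.comp_def, ContinuousLinearMap.comp_id] using
    (hasFDerivAt_gaussianKernel σ (y - z)).comp y (hasFDerivAt_sub_const z)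

lemma norm_fderiv_gaussianSmoothing_le_moment [IsFiniteMeasure μ] {σ : ℝ} (hσ : 0 < σ) (x : E) :
    ‖fderiv ℝ (gaussianSmoothing μ σ) x‖ ≤
      (∫ z, ‖x - z‖ * gaussianKernel σ (x - z) ∂μ) / σ ^ 2 := by
  rw [(hasFDerivAt_gaussianSmoothing hσ x).fderiv, ← integral_div]
  refine (norm_integral_le_integral_norm _).trans_eq ?_
  simp only [norm_gaussianKernel_fderiv]

theorem norm_fderiv_gaussianSmoothing_le [IsProbabilityMeasure μ] {σ : ℝ} (hσ : 0 < σ) (x : E) :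
    ‖fderiv ℝ (gaussianSmoothing μ σ) x‖ ≤
      gaussianSmoothing μ σ x * (2 / σ) * (1 + √|log (gaussianSmoothing μ σ x)|) := by
  set h := gaussianSmoothing μ σ x
  have hpos : 0 < h := gaussianSmoothing_pos σ x
  have hlog : log h ≤ 0 := log_nonpos hpos.le (gaussianSmoothing_le_one σ x)
  rw [abs_of_nonpos hlog]
  -- The cut-off radius `R = 2σ√(-log h)` makes the Gaussian tail `exp (-R² / 4σ²)` equal to `h`.
  have htail : exp (-(2 * σ * √(-log h)) ^ 2 / (4 * σ ^ 2)) = h := by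
    rw [mul_pow, sq_sqrt (neg_nonneg.mpr hlog),
      show -((2 * σ) ^ 2 * -log h) / (4 * σ ^ 2) = log h by field_simp; ring, exp_log hpos]
  calc ‖fderiv ℝ (gaussianSmoothing μ σ) x‖
      ≤ (∫ z, ‖x - z‖ * gaussianKernel σ (x - z) ∂μ) / σ ^ 2 :=
        norm_fderiv_gaussianSmoothing_le_moment hσ x
    _ ≤ (2 * σ * √(-log h) * h + σ * h) / σ ^ 2 := by
        gcongr
        simpa only [htail] using
          integral_norm_mul_gaussianKernel_le (R := 2 * σ * √(-log h)) hσ (by positivity) x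
    _ = h * (2 / σ) * (1 / 2 + √(-log h)) := by
        field_simp
        ring
    _ ≤ h * (2 / σ) * (1 + √(-log h)) := by
        gcongr
        norm_num

end InnerProduct

end

/-- Gradient bound for the Gaussian-smoothed density `f` of `X + σM`:
there are constants `a, b > 0` (depending only on `n` and `σ`) such that
`|∂ᵢ f(x)| ≤ f(x) · a · (1 + |log(b f(x))|^{1/2})` for every `x` and coordinate `i`. -/
theorem heated_density_gradient_bound
    {n : ℕ} (μ : Measure (EuclideanSpace ℝ (Fin n))) [IsProbabilityMeasure μ]
    (σ : ℝ) (hσ : 0 < σ)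
    (f : EuclideanSpace ℝ (Fin n) → ℝ)
    (hf : ∀ x, f x = ∫ z, (2 * π * σ ^ 2) ^ (-(n : ℝ) / 2) *
      exp (-‖x - z‖ ^ 2 / (2 * σ ^ 2)) ∂μ) :
    ∃ a > 0, ∃ b > 0, ∀ (x : EuclideanSpace ℝ (Fin n)) (i : Fin n),
      |fderiv ℝ f x (EuclideanSpace.single i 1)| ≤
        f x * a * (1 + Real.sqrt |log (b * f x)|) := by
  set K := (2 * π * σ ^ 2) ^ (-(n : ℝ) / 2)
  have hK : 0 < K := by positivity
  have hfK : f = fun x ↦ K * gaussianSmoothing μ σ x :=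
    funext fun x ↦ by rw [hf, gaussianSmoothing, ← integral_const_mul]; rfl
  refine ⟨2 / σ, by positivity, K⁻¹, by positivity, fun x i ↦ ?_⟩
  have hderiv : fderiv ℝ f x = K • fderiv ℝ (gaussianSmoothing μ σ) x := by
    rw [hfK]
    exact fderiv_const_mul (hasFDerivAt_gaussianSmoothing hσ x).differentiableAt K
  calc |fderiv ℝ f x (EuclideanSpace.single i 1)|
      ≤ ‖fderiv ℝ f x‖ := by
        simpa using (fderiv ℝ f x).le_opNorm (EuclideanSpace.single i 1)
    _ = K * ‖fderiv ℝ (gaussianSmoothing μ σ) x‖ := by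
        rw [hderiv, norm_smul, Real.norm_of_nonneg hK.le]
    _ ≤ K * (gaussianSmoothing μ σ x * (2 / σ) *
          (1 + √|log (gaussianSmoothing μ σ x)|)) := by
        gcongr
        exact norm_fderiv_gaussianSmoothing_le hσ x
    _ = f x * (2 / σ) * (1 + √|log (K⁻¹ * f x)|) := by
        rw [hfK, inv_mul_cancel_left₀ hK.ne']
        ring
end

section
/- Fix d ≥ 3 and |λ| ≤ 2√(d−1). Suppose {vᵢ}ᵢ₌₁^d and w are unit vectors in ℝ^d with ⟨vᵢ, v_j⟩ = (λ² − d)/(d(d−1)) for i ≠ j and ⟨vᵢ, w⟩ = λ/d, and let α, β ∈ ℝ be such that aᵢ = αw + βvᵢ and bᵢ = αvᵢ + βw are unit vectors with ⟨aᵢ, bᵢ⟩ = 0. Then there exist t₁, t₂ ≥ 0 with t₁ + t₂ = 1 such that for every u ∈ ℝ^d: ‖u‖² = Σᵢ₌₁^d ( t₁⟨u, aᵢ⟩² + t₂⟨u, bᵢ⟩² ). -/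
open scoped RealInnerProductSpace
open Finset


lemma sum_eq_smul {d : ℕ} (hd : 1 ≤ d) (lam c : ℝ)
    (v : Fin d → EuclideanSpace ℝ (Fin d)) (w : EuclideanSpace ℝ (Fin d))
    (hv : ∀ i, ‖v i‖ = 1) (hw : ‖w‖ = 1)
    (hvv : ∀ i j, i ≠ j → ⟪v i, v j⟫ = c)
    (hvw : ∀ i, ⟪v i, w⟫ = lam / d)
    (hc : 1 + ((d:ℝ) - 1) * c = lam ^ 2 / d) :
    ∑ i, v i = lam • w := by
  have hd0 : (d:ℝ) ≠ 0 := Nat.cast_ne_zero.mpr (by omega)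
  have hvi : ∀ i, ⟪v i, v i⟫ = 1 := fun i => by
    rw [real_inner_self_eq_norm_sq, hv, one_pow]
  have hrow : ∀ i : Fin d, ∑ j, ⟪v i, v j⟫ = lam ^ 2 / d := by
    intro i
    rw [← Finset.add_sum_erase _ _ (Finset.mem_univ i), hvi,
      Finset.sum_congr rfl (fun j hj => hvv i j (by
        intro h; exact (Finset.mem_erase.mp hj).1 h.symm)),
      Finset.sum_const, Finset.card_erase_of_mem (Finset.mem_univ i)]
    simp only [Finset.card_univ, Fintype.card_fin, nsmul_eq_mul]
    rw [← hc]
    push_cast [Nat.cast_sub hd]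
    ring_nf
  have hss : ⟪∑ i, v i, ∑ i, v i⟫ = lam ^ 2 := by
    rw [sum_inner]
    rw [Finset.sum_congr rfl (fun i _ => by rw [inner_sum, hrow i])]
    rw [Finset.sum_const, Finset.card_univ, Fintype.card_fin, nsmul_eq_mul]
    field_simp
  have hsw : ⟪∑ i, v i, w⟫ = lam := by
    rw [sum_inner, Finset.sum_congr rfl (fun i _ => hvw i), Finset.sum_const,
      Finset.card_univ, Fintype.card_fin, nsmul_eq_mul]
    field_simp
  have hws : ⟪w, ∑ i, v i⟫ = lam := by rw [real_inner_comm]; exact hsw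
  have hww : ⟪w, w⟫ = (1:ℝ) := by rw [real_inner_self_eq_norm_sq, hw]; norm_num
  have h0 : ⟪(∑ i, v i) - lam • w, (∑ i, v i) - lam • w⟫ = 0 := by
    rw [inner_sub_left, inner_sub_right, inner_sub_right, real_inner_smul_left,
      real_inner_smul_left, real_inner_smul_right, real_inner_smul_right,
      hss, hsw, hws, hww]
    ring
  exact sub_eq_zero.mp (inner_self_eq_zero.mp h0)

lemma choose_t (τ A B : ℝ) (hkey : (τ - A) * (τ - B) ≤ 0) :
    ∃ t₁ : ℝ, 0 ≤ t₁ ∧ t₁ ≤ 1 ∧ t₁ * B + (1 - t₁) * A = τ := by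
  by_cases hBA : B = A
  · refine ⟨1/2, by norm_num, by norm_num, ?_⟩
    have : τ = A := by nlinarith [sq_nonneg (τ - A)]
    rw [hBA, this]; ring
  · refine ⟨(τ - A) / (B - A), ?_, ?_, ?_⟩
    · rcases lt_or_gt_of_ne (sub_ne_zero.mpr hBA) with h | h
      · rw [div_nonneg_iff]
        right
        constructor <;> nlinarith
      · apply div_nonneg _ (le_of_lt h)
        nlinarith
    · rcases lt_or_gt_of_ne (sub_ne_zero.mpr hBA) with h | h
      · rw [div_le_iff_of_neg h]
        nlinarith
      · rw [div_le_one h]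
        nlinarith
    · field_simp [sub_ne_zero.mpr hBA]
      ring


lemma frame_quad {d : ℕ} (hd : 1 ≤ d) (lam c : ℝ)
    (v : Fin d → EuclideanSpace ℝ (Fin d)) (w : EuclideanSpace ℝ (Fin d))
    (hv : ∀ i, ‖v i‖ = 1) (hw : ‖w‖ = 1)
    (hvv : ∀ i j, i ≠ j → ⟪v i, v j⟫ = c)
    (hvw : ∀ i, ⟪v i, w⟫ = lam / d)
    (hsum : ∑ i, v i = lam • w)
    (hc : 1 + ((d:ℝ) - 1) * c = lam ^ 2 / d)
    (hclt : c < 1) :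
    ∀ u, ∑ i, ⟪u, v i⟫ ^ 2 = (1 - c) * ‖u‖ ^ 2 + ((d:ℝ) * c) * ⟪u, w⟫ ^ 2 := by
  have hd0 : (d:ℝ) ≠ 0 := Nat.cast_ne_zero.mpr (by omega)
  have hvi : ∀ i, ⟪v i, v i⟫ = 1 := fun i => by
    rw [real_inner_self_eq_norm_sq, hv, one_pow]
  set M : EuclideanSpace ℝ (Fin d) → EuclideanSpace ℝ (Fin d) :=
    fun u => (∑ i, ⟪u, v i⟫ • v i) - (1 - c) • u - ((d:ℝ) * c * ⟪u, w⟫) • w with hM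
  -- (a) generic formula
  have hA : ∀ x u, ⟪x, M u⟫ =
      (∑ i, ⟪u, v i⟫ * ⟪x, v i⟫) - (1 - c) * ⟪x, u⟫ - ((d:ℝ) * c * ⟪u, w⟫) * ⟪x, w⟫ := by
    intro x u
    simp only [hM, inner_sub_right, inner_sum, real_inner_smul_right]
  have hsumu : ∀ u : EuclideanSpace ℝ (Fin d), ∑ j, ⟪u, v j⟫ = lam * ⟪u, w⟫ := by
    intro u
    rw [← inner_sum, hsum, real_inner_smul_right]
  -- (b) M u ⟂ v i
  have hB : ∀ u i, ⟪v i, M u⟫ = 0 := by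
    intro u i
    rw [hA]
    have hsplit : ∑ j, ⟪u, v j⟫ * ⟪v i, v j⟫
        = (1 - c) * ⟪u, v i⟫ + c * (lam * ⟪u, w⟫) := by
      rw [← Finset.add_sum_erase _ _ (Finset.mem_univ i), hvi,
        Finset.sum_congr rfl (fun j hj => by
          rw [hvv i j (fun h => (Finset.mem_erase.mp hj).1 h.symm)]),
        ← Finset.sum_mul, Finset.sum_erase_eq_sub (Finset.mem_univ i), hsumu]
      ring
    rw [hsplit, hvw, real_inner_comm u (v i)]
    field_simp
    ring
  have hB' : ∀ u i, ⟪M u, v i⟫ = 0 := fun u i => by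
    have h := hB u i; rwa [real_inner_comm] at h
  -- (c) M u ⟂ w
  have hC : ∀ u, ⟪w, M u⟫ = 0 := by
    intro u
    rw [hA]
    have h1 : ∑ j, ⟪u, v j⟫ * ⟪w, v j⟫ = lam / d * (lam * ⟪u, w⟫) := by
      have e : ∀ j : Fin d, ⟪u, v j⟫ * ⟪w, v j⟫ = ⟪u, v j⟫ * (lam / d) := fun j => by
        rw [real_inner_comm (v j) w, hvw]
      rw [Finset.sum_congr rfl (fun j _ => e j), ← Finset.sum_mul, hsumu]
      ring
    have hww : ⟪w, w⟫ = (1:ℝ) := by rw [real_inner_self_eq_norm_sq, hw]; norm_num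
    rw [h1, hww]
    have h2 : lam / (d:ℝ) * lam = 1 - c + (d:ℝ) * c := by
      rw [div_mul_eq_mul_div, ← sq, ← hc]; ring
    have e3 : ⟪w, u⟫ = ⟪u, w⟫ := real_inner_comm u w
    linear_combination ⟪u, w⟫ * h2 - (1 - c) * e3
  have hC' : ∀ u, ⟪M u, w⟫ = 0 := fun u => by
    have h := hC u; rwa [real_inner_comm] at h
  -- (d) ‖Mu‖² = -(1-c)⟪u,Mu⟫
  have hD : ∀ u, ⟪M u, M u⟫ = -(1 - c) * ⟪u, M u⟫ := by
    intro u
    rw [hA (M u) u]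
    have h1 : ∑ i, ⟪u, v i⟫ * ⟪M u, v i⟫ = 0 :=
      Finset.sum_eq_zero fun i _ => by rw [hB' u i, mul_zero]
    rw [h1, real_inner_comm u (M u), hC' u]
    ring
  -- (e) nonpositivity
  have hE : ∀ u, ⟪u, M u⟫ ≤ 0 := by
    intro u
    have h1 := hD u
    have h2 : (0:ℝ) ≤ ⟪M u, M u⟫ := real_inner_self_nonneg
    nlinarith
  -- trace is zero
  have htr : ∑ k, ⟪(EuclideanSpace.single k (1:ℝ)), M (EuclideanSpace.single k (1:ℝ))⟫ = 0 := by
    have hform : ∀ k : Fin d, ⟪(EuclideanSpace.single k (1:ℝ)), M (EuclideanSpace.single k (1:ℝ))⟫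
        = (∑ i, (v i k) ^ 2) - (1 - c) - ((d:ℝ) * c) * (w k) ^ 2 := by
      intro k
      rw [hA]
      simp [EuclideanSpace.inner_single_left, EuclideanSpace.inner_single_right]
      ring
    rw [Finset.sum_congr rfl (fun k _ => hform k)]
    rw [Finset.sum_sub_distrib, Finset.sum_sub_distrib, Finset.sum_comm]
    have h1 : ∀ i : Fin d, ∑ k, (v i k) ^ 2 = 1 := by
      intro i
      have h := hvi i
      rw [PiLp.inner_apply] at h
      simpa [pow_two] using h
    have h2 : ∑ k, (w k) ^ 2 = 1 := by
      have h : ⟪w, w⟫ = (1:ℝ) := by rw [real_inner_self_eq_norm_sq, hw]; norm_num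
      rw [PiLp.inner_apply] at h
      simpa [pow_two] using h
    rw [Finset.sum_congr rfl (fun i _ => h1 i), ← Finset.mul_sum, h2]
    simp [Finset.card_univ]
  -- each diagonal entry zero, hence M e_k = 0
  have hMe : ∀ k, M (EuclideanSpace.single k (1:ℝ)) = 0 := by
    intro k
    have hz : ⟪(EuclideanSpace.single k (1:ℝ)), M (EuclideanSpace.single k (1:ℝ))⟫ = 0 :=
      (Finset.sum_eq_zero_iff_of_nonpos (fun k _ => hE _)).mp htr k (Finset.mem_univ k)
    have h1 := hD (EuclideanSpace.single k (1:ℝ))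
    rw [hz] at h1
    simp only [mul_zero] at h1
    exact inner_self_eq_zero.mp h1
  -- symmetry
  have hsymm : ∀ x u, ⟪x, M u⟫ = ⟪u, M x⟫ := by
    intro x u
    have hs : ∑ i, ⟪u, v i⟫ * ⟪x, v i⟫ = ∑ i, ⟪x, v i⟫ * ⟪u, v i⟫ :=
      Finset.sum_congr rfl fun i _ => mul_comm _ _
    rw [hA, hA, hs, real_inner_comm u x]
    ring
  -- conclude M u = 0 in quadratic form
  have hMzero : ∀ u : EuclideanSpace ℝ (Fin d), ⟪u, M u⟫ = 0 := by
    intro u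
    have hcoord : ∀ k, (M u) k = 0 := by
      intro k
      have h : ⟪(EuclideanSpace.single k (1:ℝ)), M u⟫ = 0 := by
        rw [hsymm, hMe]; simp
      simpa [EuclideanSpace.inner_single_left] using h
    have hz : M u = 0 := by ext k; exact hcoord k
    rw [hz]; simp
  intro u
  have h := hMzero u
  rw [hA] at h
  have hsq : ∑ i, ⟪u, v i⟫ * ⟪u, v i⟫ = ∑ i, ⟪u, v i⟫ ^ 2 :=
    Finset.sum_congr rfl fun i _ => (sq _).symm
  rw [hsq, real_inner_self_eq_norm_sq] at h
  nlinarith [h]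

set_option maxHeartbeats 1000000 in
/-- For `|λ| ≤ 2√(d−1)`, the rotated frames `aᵢ = αw + βvᵢ`, `bᵢ = αvᵢ + βw` admit a convex
combination `t₁, t₂` such that `‖u‖² = Σᵢ (t₁⟪u,aᵢ⟫² + t₂⟪u,bᵢ⟫²)` for every `u ∈ ℝ^d`. -/
theorem frame_decomposition
    {d : ℕ} (hd : 3 ≤ d) (lam : ℝ) (hlam : |lam| ≤ 2 * Real.sqrt ((d : ℝ) - 1))
    (v : Fin d → EuclideanSpace ℝ (Fin d)) (w : EuclideanSpace ℝ (Fin d))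
    (hv : ∀ i, ‖v i‖ = 1) (hw : ‖w‖ = 1)
    (hvv : ∀ i j, i ≠ j → ⟪v i, v j⟫ = (lam ^ 2 - d) / (d * ((d : ℝ) - 1)))
    (hvw : ∀ i, ⟪v i, w⟫ = lam / d)
    (α β : ℝ)
    (a b : Fin d → EuclideanSpace ℝ (Fin d))
    (ha : ∀ i, a i = α • w + β • v i) (hb : ∀ i, b i = α • v i + β • w)
    (haunit : ∀ i, ‖a i‖ = 1) (hbunit : ∀ i, ‖b i‖ = 1)
    (hab : ∀ i, ⟪a i, b i⟫ = 0) :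
    ∃ t₁ t₂ : ℝ, 0 ≤ t₁ ∧ 0 ≤ t₂ ∧ t₁ + t₂ = 1 ∧
      ∀ u : EuclideanSpace ℝ (Fin d),
        ‖u‖ ^ 2 = ∑ i, (t₁ * ⟪u, a i⟫ ^ 2 + t₂ * ⟪u, b i⟫ ^ 2) := by
  have hd1 : 1 ≤ d := by omega
  have hD3 : (3:ℝ) ≤ (d:ℝ) := by exact_mod_cast hd
  have hd0 : (d:ℝ) ≠ 0 := by linarith
  have hd10 : (d:ℝ) - 1 ≠ 0 := by linarith
  have hlam2 : lam ^ 2 ≤ 4 * ((d:ℝ) - 1) := by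
    have h1 : |lam| ^ 2 ≤ (2 * Real.sqrt ((d:ℝ) - 1)) ^ 2 :=
      pow_le_pow_left₀ (abs_nonneg lam) hlam 2
    rw [sq_abs, mul_pow, Real.sq_sqrt (by linarith)] at h1
    linarith
  have hlamlt : lam ^ 2 < (d:ℝ) ^ 2 := by nlinarith
  have hDq : (0:ℝ) < (d:ℝ) ^ 2 - lam ^ 2 := by linarith
  have hDq0 : (d:ℝ) ^ 2 - lam ^ 2 ≠ 0 := ne_of_gt hDq
  set c : ℝ := (lam ^ 2 - d) / (d * ((d:ℝ) - 1)) with hcdef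
  have hc : 1 + ((d:ℝ) - 1) * c = lam ^ 2 / d := by
    rw [hcdef]; field_simp; ring
  have hclt : c < 1 := by
    rw [hcdef, div_lt_one (by nlinarith)]
    nlinarith
  have hsum : ∑ i, v i = lam • w :=
    sum_eq_smul hd1 lam c v w hv hw hvv hvw hc
  have hquad := frame_quad hd1 lam c v w hv hw hvv hvw hsum hc hclt
  -- inner product basics
  set i0 : Fin d := ⟨0, by omega⟩ with hi0
  have hww : ⟪w, w⟫ = (1:ℝ) := by rw [real_inner_self_eq_norm_sq, hw]; norm_num
  have hvv0 : ⟪v i0, v i0⟫ = (1:ℝ) := by rw [real_inner_self_eq_norm_sq, hv]; norm_num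
  have hwv : ⟪w, v i0⟫ = lam / d := by rw [real_inner_comm]; exact hvw i0
  -- unit norm condition
  have hnorm0 : α ^ 2 + β ^ 2 + 2 * α * β * (lam / d) = 1 := by
    have h : ⟪a i0, a i0⟫ = (1:ℝ) := by
      rw [real_inner_self_eq_norm_sq, haunit]; norm_num
    rw [ha i0, inner_add_left, inner_add_right, inner_add_right,
      real_inner_smul_left, real_inner_smul_left, real_inner_smul_left,
      real_inner_smul_left, real_inner_smul_right, real_inner_smul_right,
      real_inner_smul_right, real_inner_smul_right, hww, hvv0, hwv, hvw] at h
    nlinarith [h]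
  have horth0 : (α ^ 2 + β ^ 2) * (lam / d) + 2 * α * β = 0 := by
    have h := hab i0
    rw [ha i0, hb i0, inner_add_left, inner_add_right, inner_add_right,
      real_inner_smul_left, real_inner_smul_left, real_inner_smul_left,
      real_inner_smul_left, real_inner_smul_right, real_inner_smul_right,
      real_inner_smul_right, real_inner_smul_right, hww, hvv0, hwv, hvw] at h
    nlinarith [h]
  have hnorm' : (α ^ 2 + β ^ 2) * (d:ℝ) + 2 * α * β * lam = (d:ℝ) := by
    field_simp at hnorm0
    linear_combination hnorm0
  have horth' : (α ^ 2 + β ^ 2) * lam + 2 * α * β * (d:ℝ) = 0 := by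
    field_simp at horth0
    linear_combination horth0
  have hS : (α ^ 2 + β ^ 2) * ((d:ℝ) ^ 2 - lam ^ 2) = (d:ℝ) ^ 2 := by
    linear_combination (d:ℝ) * hnorm' - lam * horth'
  have hP : (2 * α * β) * ((d:ℝ) ^ 2 - lam ^ 2) = -((d:ℝ) * lam) := by
    linear_combination (d:ℝ) * horth' - lam * hnorm'
  set τ : ℝ := (d:ℝ) * ((d:ℝ) - 1) / ((d:ℝ) ^ 2 - lam ^ 2) with hτdef
  have hτ : τ * ((d:ℝ) ^ 2 - lam ^ 2) = (d:ℝ) * ((d:ℝ) - 1) := by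
    rw [hτdef]; field_simp
  have h1c : τ * (1 - c) = 1 := by
    rw [hτdef, hcdef]; field_simp; ring
  have hcoef : (α ^ 2 + β ^ 2 - τ) * (d:ℝ) + (2 * α * β) * lam + τ * (d:ℝ) * c = 0 := by
    have hX : ((α ^ 2 + β ^ 2 - τ) * (d:ℝ) + (2 * α * β) * lam + τ * (d:ℝ) * c)
        * ((d:ℝ) ^ 2 - lam ^ 2) = 0 := by
      have hcD : c * ((d:ℝ) * ((d:ℝ) - 1)) = lam ^ 2 - (d:ℝ) := by
        rw [hcdef]; field_simp
      linear_combination (d:ℝ) * hS - (d:ℝ) * hτ + lam * hP + (d:ℝ) * c * hτ + (d:ℝ) * hcD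
    exact (mul_eq_zero.mp hX).resolve_right hDq0
  -- key inequality
  have hkey : (τ - α ^ 2) * (τ - β ^ 2) ≤ 0 := by
    have hprod : ((d:ℝ) * ((d:ℝ) - 1) - α ^ 2 * ((d:ℝ) ^ 2 - lam ^ 2))
        * ((d:ℝ) * ((d:ℝ) - 1) - β ^ 2 * ((d:ℝ) ^ 2 - lam ^ 2))
        = (d:ℝ) ^ 2 * (lam ^ 2 / 4 - ((d:ℝ) - 1)) := by
      linear_combination (-(d:ℝ) * ((d:ℝ) - 1)) * hS
        + (1/2) * (α * β * ((d:ℝ) ^ 2 - lam ^ 2) - (d:ℝ) * lam / 2) * hP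
    have e1 : (τ - α ^ 2) * ((d:ℝ) ^ 2 - lam ^ 2)
        = (d:ℝ) * ((d:ℝ) - 1) - α ^ 2 * ((d:ℝ) ^ 2 - lam ^ 2) := by
      linear_combination hτ
    have e2 : (τ - β ^ 2) * ((d:ℝ) ^ 2 - lam ^ 2)
        = (d:ℝ) * ((d:ℝ) - 1) - β ^ 2 * ((d:ℝ) ^ 2 - lam ^ 2) := by
      linear_combination hτ
    have h5 : (τ - α ^ 2) * (τ - β ^ 2) * (((d:ℝ) ^ 2 - lam ^ 2) * ((d:ℝ) ^ 2 - lam ^ 2)) ≤ 0 := by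
      calc (τ - α ^ 2) * (τ - β ^ 2) * (((d:ℝ) ^ 2 - lam ^ 2) * ((d:ℝ) ^ 2 - lam ^ 2))
          = ((τ - α ^ 2) * ((d:ℝ) ^ 2 - lam ^ 2)) * ((τ - β ^ 2) * ((d:ℝ) ^ 2 - lam ^ 2)) := by ring
        _ = ((d:ℝ) * ((d:ℝ) - 1) - α ^ 2 * ((d:ℝ) ^ 2 - lam ^ 2))
            * ((d:ℝ) * ((d:ℝ) - 1) - β ^ 2 * ((d:ℝ) ^ 2 - lam ^ 2)) := by rw [e1, e2]
        _ = (d:ℝ) ^ 2 * (lam ^ 2 / 4 - ((d:ℝ) - 1)) := hprod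
        _ ≤ 0 := by nlinarith
      
    have hq2 : 0 < ((d:ℝ) ^ 2 - lam ^ 2) * ((d:ℝ) ^ 2 - lam ^ 2) := mul_pos hDq hDq
    nlinarith [h5, hq2]
  -- choose t₁
  obtain ⟨t₁, ht₁0, ht₁1, hθ⟩ := choose_t τ (α ^ 2) (β ^ 2) hkey
  refine ⟨t₁, 1 - t₁, ht₁0, by linarith, by ring, ?_⟩
  intro u
  have hxa : ∀ i, ⟪u, a i⟫ = α * ⟪u, w⟫ + β * ⟪u, v i⟫ := fun i => by
    rw [ha i, inner_add_right, real_inner_smul_right, real_inner_smul_right]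
  have hxb : ∀ i, ⟪u, b i⟫ = α * ⟪u, v i⟫ + β * ⟪u, w⟫ := fun i => by
    rw [hb i, inner_add_right, real_inner_smul_right, real_inner_smul_right]
  have hsumu : ∑ j, ⟪u, v j⟫ = lam * ⟪u, w⟫ := by
    rw [← inner_sum, hsum, real_inner_smul_right]
  have hterm : ∀ i, t₁ * ⟪u, a i⟫ ^ 2 + (1 - t₁) * ⟪u, b i⟫ ^ 2
      = (α ^ 2 + β ^ 2 - (t₁ * β ^ 2 + (1 - t₁) * α ^ 2)) * ⟪u, w⟫ ^ 2
        + (2 * α * β * ⟪u, w⟫) * ⟪u, v i⟫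
        + (t₁ * β ^ 2 + (1 - t₁) * α ^ 2) * ⟪u, v i⟫ ^ 2 := fun i => by
    rw [hxa i, hxb i]; ring
  rw [Finset.sum_congr rfl (fun i _ => hterm i)]
  rw [Finset.sum_add_distrib, Finset.sum_add_distrib, Finset.sum_const,
    ← Finset.mul_sum, ← Finset.mul_sum, hsumu, hquad u, hθ,
    Finset.card_univ, Fintype.card_fin, nsmul_eq_mul]
  linear_combination (-(‖u‖ ^ 2)) * h1c - (⟪u, w⟫ ^ 2) * hcoef
end

section
/- Let q_k(x) = √((d−1)/d)·U_k(x) − (1/√(d(d−1)))·U_{k−2}(x) where U_k is the Chebyshev polynomial of the second kind, and let f(k, x) = q_k(x)/√(d(d−1)^{k−1}). Then the function g on the d-regular tree defined by g(v) = f(|v|, λ/(2√(d−1))), where |v| is the distance from v to the root, satisfies the eigenvector equation Σ_{w∼v} g(w) = λ·g(v) at every vertex v, for λ ∈ [−2√(d−1), 2√(d−1)]. -/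
open Polynomial

/-!
Writing `s = √(d-1)`, the tree recurrence `f(k-1) + s² f(k+1) = 2 s x f(k)` becomes the
Chebyshev recurrence `c(k-1) + c(k+1) = 2 x c(k)` after the substitution `f(k) = c(k) / s^(k-1)`,
and `q` is a linear combination of two shifts of `U`, so it satisfies the latter. At the root,
`U_{-1} = 0` and `U_{-2} = -1` make `f(0) = 1` and `d f(1) = 2 s x = λ`.
-/

theorem Real.sqrt_zpow {b : ℝ} (hb : 0 ≤ b) (m : ℤ) : √(b ^ m) = √b ^ m := by
  conv_lhs => rw [← Real.sq_sqrt hb, ← zpow_natCast, ← zpow_mul, mul_comm, zpow_mul,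
    zpow_natCast]
  exact Real.sqrt_sq (zpow_nonneg (Real.sqrt_nonneg b) m)

theorem Polynomial.Chebyshev.eval_U_sub_U_sub_two_recurrence {R : Type*} [CommRing R]
    (a b x : R) (n : ℤ) :
    (a * (U R n).eval x - b * (U R (n - 2)).eval x)
      + (a * (U R (n + 2)).eval x - b * (U R n).eval x)
      = 2 * x * (a * (U R (n + 1)).eval x - b * (U R (n - 1)).eval x) := by
  have hn := congrArg (eval x) (U_add_two R n)
  have hn₂ := congrArg (eval x) (U_add_two R (n - 2))
  simp only [eval_sub, eval_mul, eval_ofNat, eval_X] at hn hn₂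
  rw [show n - 2 + 2 = n by ring, show n - 2 + 1 = n - 1 by ring] at hn₂
  linear_combination a * hn - b * hn₂

theorem tree_recurrence_of_chebyshev_recurrence {K : Type*} [Field K] {c f : ℕ → K}
    {s t x : K} (hs : s ≠ 0) (hf : ∀ k : ℕ, f k = c k / (t * s ^ ((k : ℤ) - 1)))
    (hc : ∀ k : ℕ, c k + c (k + 2) = 2 * x * c (k + 1)) (k : ℕ) :
    f k + s ^ 2 * f (k + 2) = 2 * s * x * f (k + 1) := by
  have hpow : ∀ j : ℕ, s ^ ((j : ℤ) - 1) = s ^ j / s := fun j => by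
    rw [zpow_sub_one₀ hs, zpow_natCast, div_eq_mul_inv]
  rw [hf, hf, hf, hpow, hpow, hpow, pow_add, pow_add]
  field_simp
  linear_combination t⁻¹ * hc k

theorem spherical_function_eigenvector_general
    (d : ℕ) (hd : 3 ≤ d) (lam : ℝ)
    (q : ℕ → ℝ → ℝ)
    (hq : ∀ (k : ℕ) (x : ℝ), q k x
      = Real.sqrt (((d : ℝ) - 1) / d) * (Chebyshev.U ℝ (k : ℤ)).eval x
        - (1 / Real.sqrt ((d : ℝ) * ((d : ℝ) - 1))) * (Chebyshev.U ℝ ((k : ℤ) - 2)).eval x)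
    (f : ℕ → ℝ → ℝ)
    (hf : ∀ (k : ℕ) (x : ℝ), f k x = q k x / Real.sqrt ((d : ℝ) * ((d : ℝ) - 1) ^ ((k : ℤ) - 1)))
    (x : ℝ) (hx : x = lam / (2 * Real.sqrt ((d : ℝ) - 1))) :
    (d : ℝ) * f 1 x = lam * f 0 x ∧
      ∀ k : ℕ, 1 ≤ k → f (k - 1) x + ((d : ℝ) - 1) * f (k + 1) x = lam * f k x := by
  have hd₁ : (1 : ℝ) < d := by exact_mod_cast (by omega : 1 < d)
  set s := √((d : ℝ) - 1)
  set t := √(d : ℝ)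
  have hs : 0 < s := Real.sqrt_pos.mpr (by linarith)
  have ht : 0 < t := Real.sqrt_pos.mpr (by linarith)
  have hs2 : s ^ 2 = d - 1 := Real.sq_sqrt (by linarith)
  have ht2 : t ^ 2 = d := Real.sq_sqrt (by linarith)
  have hlam : lam = 2 * s * x := by rw [hx]; field_simp
  have hf' : ∀ k : ℕ, f k x = q k x / (t * s ^ ((k : ℤ) - 1)) := fun k => by
    rw [hf, Real.sqrt_mul (by linarith), Real.sqrt_zpow (by linarith)]
  have hq' : ∀ k : ℕ, q k x = s / t * (Chebyshev.U ℝ k).eval x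
      - 1 / (t * s) * (Chebyshev.U ℝ ((k : ℤ) - 2)).eval x := fun k => by
    rw [hq, Real.sqrt_div (by linarith), Real.sqrt_mul (by linarith)]
  have hrec : ∀ k : ℕ, q k x + q (k + 2) x = 2 * x * q (k + 1) x := fun k => by
    simpa only [hq', Nat.cast_add, Nat.cast_ofNat, Nat.cast_one, add_sub_cancel_right,
      show ((k : ℤ) + 1) - 2 = k - 1 by ring]
      using Chebyshev.eval_U_sub_U_sub_two_recurrence (s / t) (1 / (t * s)) x k
  refine ⟨?root, ?interior⟩
  case root =>
    have hf₀ : f 0 x = 1 := by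
      rw [hf', hq']
      norm_num [Chebyshev.U_zero, Chebyshev.U_neg_two]
      field_simp
      linear_combination hs2 - ht2
    rw [hf₀, hf', hq', hlam]
    norm_num [Chebyshev.U_one, Chebyshev.U_neg_one]
    field_simp
    linear_combination -x * ht2
  case interior =>
    rintro (_ | k) hk
    · omega
    simpa only [hs2, hlam, Nat.add_sub_cancel, add_assoc]
      using tree_recurrence_of_chebyshev_recurrence (f := fun k => f k x) hs.ne' hf' hrec k

/-- The spherical function `g(v) = f(|v|, λ/(2√(d−1)))` built from Chebyshev polynomials of
the second kind satisfies the eigenvector equation `Σ_{w∼v} g(w) = λ g(v)` on the `d`-regular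
tree: at the root the `d` neighbours are at distance `1`, and a vertex at distance `k ≥ 1`
has one neighbour at distance `k−1` and `d−1` at distance `k+1`. -/
theorem spherical_function_eigenvector
    (d : ℕ) (hd : 3 ≤ d) (lam : ℝ)
    (hlam : |lam| ≤ 2 * Real.sqrt ((d : ℝ) - 1))
    (q : ℕ → ℝ → ℝ)
    (hq : ∀ (k : ℕ) (x : ℝ), q k x
      = Real.sqrt (((d : ℝ) - 1) / d) * (Chebyshev.U ℝ (k : ℤ)).eval x
        - (1 / Real.sqrt ((d : ℝ) * ((d : ℝ) - 1))) * (Chebyshev.U ℝ ((k : ℤ) - 2)).eval x)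
    (f : ℕ → ℝ → ℝ)
    (hf : ∀ (k : ℕ) (x : ℝ), f k x = q k x / Real.sqrt ((d : ℝ) * ((d : ℝ) - 1) ^ ((k : ℤ) - 1)))
    (x : ℝ) (hx : x = lam / (2 * Real.sqrt ((d : ℝ) - 1))) :
    (d : ℝ) * f 1 x = lam * f 0 x ∧
      ∀ k : ℕ, 1 ≤ k → f (k - 1) x + ((d : ℝ) - 1) * f (k + 1) x = lam * f k x :=
  spherical_function_eigenvector_general d hd lam q hq f hf x hx
end

section
/- Let d ≥ 3 and λ ∈ ℝ. For the subspace W_λ(B_k(C)) of functions on the radius-(k+1) ball around the root of the d-regular tree that satisfy the eigenvector equation λf(v) = Σ_{w∼v} f(w) at every interior vertex v (those with all neighbors in the ball), one has dim W_λ(B_k(C)) = d(d−1)^k, the number of boundary vertices. Similarly dim W_λ(B_k(e)) = 2(d−1)^k. -/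
open Finset
open scoped Classical

/-- Vertices of the ball of radius `k+1` around the root of the `d`-regular tree `T_d`
(the `k`-neighbourhood `B_k(C)` of the star `C = B₁(o)`): `none` is the root, and
`some (i, ⟨m, f⟩)` is the vertex reached from the root by a first step `i : Fin d`
followed by `m ≤ k` further steps recorded by `f`. -/
abbrev TreeBallC (d k : ℕ) :=
  Option ((Fin d) × (Σ m : Fin (k + 1), (Fin (m : ℕ) → Fin (d - 1))))

/-- Vertices of `B_k(e)`, the `k`-neighbourhood of a fixed edge `e` in the `d`-regular
tree: `(ε, ⟨m, f⟩)` is the vertex at distance `m ≤ k` from the endpoint `ε` of `e`,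
reached by the steps recorded by `f` (the endpoints themselves have `m = 0`). -/
abbrev TreeBallE (d k : ℕ) :=
  (Fin 2) × (Σ m : Fin (k + 1), (Fin (m : ℕ) → Fin (d - 1)))

/-- `u` is the parent (the neighbour closer to the root) of `v` in `B_k(C)`. -/
def IsParentC (d k : ℕ) : TreeBallC d k → TreeBallC d k → Prop
  | _, none => False
  | none, some (_, ⟨m, _⟩) => (m : ℕ) = 0
  | some (i, ⟨m, f⟩), some (i', ⟨m', f'⟩) =>
      i = i' ∧ ∃ h : (m : ℕ) + 1 = (m' : ℕ),
        ∀ j : Fin (m : ℕ), f j = f' ⟨(j : ℕ), by have := j.isLt; omega⟩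

/-- Adjacency in `B_k(C)`. -/
def AdjC (d k : ℕ) (u v : TreeBallC d k) : Prop :=
  IsParentC d k u v ∨ IsParentC d k v u

/-- `u` is the parent (the neighbour closer to the edge `e`) of `v` in `B_k(e)`. -/
def IsParentE (d k : ℕ) : TreeBallE d k → TreeBallE d k → Prop
  | (ε, ⟨m, f⟩), (ε', ⟨m', f'⟩) =>
      ε = ε' ∧ ∃ h : (m : ℕ) + 1 = (m' : ℕ),
        ∀ j : Fin (m : ℕ), f j = f' ⟨(j : ℕ), by have := j.isLt; omega⟩

/-- Adjacency in `B_k(e)`: parent/child on each side, and the edge `e` itself. -/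
def AdjE (d k : ℕ) (u v : TreeBallE d k) : Prop :=
  IsParentE d k u v ∨ IsParentE d k v u ∨
    ((u.2.1 : ℕ) = 0 ∧ (v.2.1 : ℕ) = 0 ∧ u.1 ≠ v.1)

/-- Interior vertices of `B_k(C)`: all their neighbours (in `T_d`) lie in `B_k(C)`;
these are the vertices at distance at most `k` from the root. -/
def InteriorC (d k : ℕ) : TreeBallC d k → Prop
  | none => True
  | some (_, ⟨m, _⟩) => (m : ℕ) < k

/-- Interior vertices of `B_k(e)`: all their neighbours lie in `B_k(e)`. -/
def InteriorE (d k : ℕ) (v : TreeBallE d k) : Prop := (v.2.1 : ℕ) < k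

/-- The subspace `W_λ(B_k(C))` of functions on `B_k(C)` satisfying the eigenvector
equation `λ f(v) = Σ_{w ∼ v} f(w)` at every interior vertex. -/
noncomputable def WlamC (d k : ℕ) (lam : ℝ) : Submodule ℝ (TreeBallC d k → ℝ) where
  carrier := {f | ∀ v, InteriorC d k v →
    lam * f v = ∑ w ∈ Finset.univ.filter (fun w => AdjC d k v w), f w}
  add_mem' := by
    intro a b ha hb v hv
    simp only [Pi.add_apply, Finset.sum_add_distrib, mul_add, ha v hv, hb v hv]
  zero_mem' := by
    intro v hv
    simp
  smul_mem' := by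
    intro c a ha v hv
    simp only [Pi.smul_apply, smul_eq_mul, ← Finset.mul_sum, ← ha v hv]
    ring

/-- The subspace `W_λ(B_k(e))`. -/
noncomputable def WlamE (d k : ℕ) (lam : ℝ) : Submodule ℝ (TreeBallE d k → ℝ) where
  carrier := {f | ∀ v, InteriorE d k v →
    lam * f v = ∑ w ∈ Finset.univ.filter (fun w => AdjE d k v w), f w}
  add_mem' := by
    intro a b ha hb v hv
    simp only [Pi.add_apply, Finset.sum_add_distrib, mul_add, ha v hv, hb v hv]
  zero_mem' := by
    intro v hv
    simp
  smul_mem' := by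
    intro c a ha v hv
    simp only [Pi.smul_apply, smul_eq_mul, ← Finset.mul_sum, ← ha v hv]
    ring


section Aux

abbrev Br (d k : ℕ) := Σ m : Fin (k + 1), (Fin (m : ℕ) → Fin (d - 1))

def IsParentBr (d k : ℕ) (b c : Br d k) : Prop :=
  ∃ h : (b.1 : ℕ) + 1 = (c.1 : ℕ),
    ∀ j : Fin (b.1 : ℕ), b.2 j = c.2 ⟨(j : ℕ), by have := j.isLt; omega⟩

def chld {d k : ℕ} (b : Br d k) (h : (b.1 : ℕ) < k) (j : Fin (d - 1)) : Br d k :=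
  ⟨⟨(b.1 : ℕ) + 1, by omega⟩, Fin.snoc b.2 j⟩

def par {d k : ℕ} (b : Br d k) : Br d k :=
  ⟨⟨(b.1 : ℕ) - 1, by have := b.1.isLt; omega⟩,
   fun j => b.2 ⟨(j : ℕ), j.isLt.trans_le (Nat.sub_le _ _)⟩⟩

lemma isParentBr_iff {d k : ℕ} (b c : Br d k) (h : (b.1 : ℕ) < k) :
    IsParentBr d k b c ↔ ∃ j, c = chld b h j := by
  constructor
  · rintro ⟨hm, hg⟩
    obtain ⟨⟨mv, hmv⟩, gf⟩ := b
    obtain ⟨⟨mv', hmv'⟩, gf'⟩ := c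
    dsimp only [Fin.val_mk] at hm hg h ⊢
    refine ⟨gf' ⟨mv, by show mv < mv'; omega⟩, ?_⟩
    unfold chld
    have hmv'' : mv' = mv + 1 := hm.symm
    subst hmv''
    dsimp only [Fin.val_mk]
    simp only [Sigma.mk.inj_iff, Fin.mk.injEq, heq_eq_eq, true_and]
    funext j
    rcases lt_or_ge (j : ℕ) mv with hj | hj
    · have : j = Fin.castSucc ⟨(j : ℕ), hj⟩ := by ext; rfl
      rw [this, Fin.snoc_castSucc]
      exact (hg ⟨(j : ℕ), hj⟩).symm
    · have hj2 : (j : ℕ) < mv + 1 := j.isLt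
      have : j = Fin.last mv := by ext; simp only [Fin.last]; omega
      subst this
      rw [Fin.snoc_last]
      rfl
  · rintro ⟨j, rfl⟩
    refine ⟨rfl, fun j' => ?_⟩
    show b.2 j' = (Fin.snoc b.2 j : Fin ((b.1:ℕ)+1) → Fin (d-1)) ⟨(j' : ℕ), _⟩
    have : (⟨(j' : ℕ), by have := j'.isLt; omega⟩ : Fin ((b.1 : ℕ) + 1)) = Fin.castSucc j' := by
      ext; rfl
    rw [this, Fin.snoc_castSucc]

lemma isParentBr_iff' {d k : ℕ} (b c : Br d k) :
    IsParentBr d k c b ↔ ((b.1 : ℕ) ≠ 0 ∧ c = par b) := by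
  constructor
  · rintro ⟨hm, hg⟩
    refine ⟨by omega, ?_⟩
    obtain ⟨⟨mv, hmv⟩, gf⟩ := b
    obtain ⟨⟨mv', hmv'⟩, gf'⟩ := c
    dsimp only [Fin.val_mk] at hm hg ⊢
    unfold par
    dsimp only [Fin.val_mk]
    have hmm : mv' = mv - 1 := by omega
    subst hmm
    simp only [Sigma.mk.inj_iff, Fin.mk.injEq, heq_eq_eq, true_and]
    funext j
    exact hg j
  · rintro ⟨hb, rfl⟩
    refine ⟨?_, fun j => rfl⟩
    show (b.1 : ℕ) - 1 + 1 = (b.1 : ℕ)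
    omega

noncomputable def Fb (d : ℕ) (lam a r0 : ℝ) (G : (m : ℕ) → (Fin m → Fin (d - 1)) → ℝ) :
    (m : ℕ) → (Fin m → Fin (d - 1)) → ℝ
  | 0, _ => r0
  | 1, gf => if (gf (Fin.last 0) : ℕ) ≠ 0 then 0 else
      lam * r0 - a - G 0 (gf ∘ Fin.castSucc)
  | (m + 2), gf => if (gf (Fin.last (m + 1)) : ℕ) ≠ 0 then 0 else
      lam * Fb d lam a r0 G (m + 1) (gf ∘ Fin.castSucc)
        - Fb d lam a r0 G m ((gf ∘ Fin.castSucc) ∘ Fin.castSucc)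
        - G (m + 1) (gf ∘ Fin.castSucc)

noncomputable def FbP (d : ℕ) (lam a r0 : ℝ) (G : (m : ℕ) → (Fin m → Fin (d - 1)) → ℝ) :
    (m : ℕ) → (Fin m → Fin (d - 1)) → ℝ
  | 0, _ => a
  | (m + 1), gf => Fb d lam a r0 G m (gf ∘ Fin.castSucc)

lemma snoc_comp_castSucc {d m : ℕ} (gf : Fin m → Fin (d - 1)) (j : Fin (d - 1)) :
    (Fin.snoc gf j : Fin (m+1) → Fin (d-1)) ∘ Fin.castSucc = gf := by
  funext x
  simp [Fin.snoc_castSucc]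

lemma Fb_key (d : ℕ) (hd : 3 ≤ d) (lam a r0 : ℝ) (G : (m : ℕ) → (Fin m → Fin (d - 1)) → ℝ)
    (m : ℕ) (gf : Fin m → Fin (d - 1)) :
    lam * Fb d lam a r0 G m gf - FbP d lam a r0 G m gf
      - ∑ j : Fin (d - 1), Fb d lam a r0 G (m + 1) (Fin.snoc gf j) = G m gf := by
  set j0 : Fin (d - 1) := ⟨0, by omega⟩ with hj0
  have hsum : ∑ j : Fin (d - 1), Fb d lam a r0 G (m + 1) (Fin.snoc gf j)
      = Fb d lam a r0 G (m + 1) (Fin.snoc gf j0) := by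
    refine Finset.sum_eq_single_of_mem j0 (Finset.mem_univ _) ?_
    intro j _ hj
    have hjv : (j : ℕ) ≠ 0 := fun h => hj (Fin.ext h)
    have hlast : (Fin.snoc gf j : Fin (m+1) → Fin (d-1)) (Fin.last m) = j := Fin.snoc_last _ _
    cases m with
    | zero =>
      show (if ((Fin.snoc gf j : Fin 1 → Fin (d-1)) (Fin.last 0) : ℕ) ≠ 0 then (0:ℝ) else _) = 0
      rw [hlast]
      simp [hjv]
    | succ n =>
      show (if ((Fin.snoc gf j : Fin (n+2) → Fin (d-1)) (Fin.last (n+1)) : ℕ) ≠ 0 then (0:ℝ) else _) = 0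
      rw [hlast]
      simp [hjv]
  rw [hsum]
  have hlast0 : (Fin.snoc gf j0 : Fin (m+1) → Fin (d-1)) (Fin.last m) = j0 :=
    Fin.snoc_last _ _
  cases m with
  | zero =>
    show lam * r0 - a - _ = _
    rw [show Fb d lam a r0 G 1 (Fin.snoc gf j0)
        = if ((Fin.snoc gf j0 : Fin 1 → Fin (d-1)) (Fin.last 0) : ℕ) ≠ 0 then 0 else
        lam * r0 - a - G 0 ((Fin.snoc gf j0 : Fin 1 → Fin (d-1)) ∘ Fin.castSucc) from rfl]
    rw [snoc_comp_castSucc, hlast0]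
    simp only [hj0, ne_eq, not_true_eq_false, if_neg, if_false, not_not]
    ring
  | succ n =>
    show lam * Fb d lam a r0 G (n+1) gf - Fb d lam a r0 G n (gf ∘ Fin.castSucc) - _ = _
    rw [show Fb d lam a r0 G (n + 2) (Fin.snoc gf j0)
        = if ((Fin.snoc gf j0 : Fin (n+2) → Fin (d-1)) (Fin.last (n+1)) : ℕ) ≠ 0 then 0 else
        lam * Fb d lam a r0 G (n + 1) ((Fin.snoc gf j0 : Fin (n+2) → Fin (d-1)) ∘ Fin.castSucc)
        - Fb d lam a r0 G n (((Fin.snoc gf j0 : Fin (n+2) → Fin (d-1)) ∘ Fin.castSucc) ∘ Fin.castSucc)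
        - G (n + 1) ((Fin.snoc gf j0 : Fin (n+2) → Fin (d-1)) ∘ Fin.castSucc) from rfl]
    rw [snoc_comp_castSucc, hlast0]
    simp only [hj0, ne_eq, not_true_eq_false, if_neg, if_false, not_not]
    ring


-- Bridging lemmas between IsParentC/E and IsParentBr
lemma isParentC_some_some {d k : ℕ} (i i' : Fin d) (b b' : Br d k) :
    IsParentC d k (some (i, b)) (some (i', b')) ↔ (i = i' ∧ IsParentBr d k b b') := by
  obtain ⟨m, g⟩ := b; obtain ⟨m', g'⟩ := b'
  exact Iff.rfl

lemma isParentC_none_some {d k : ℕ} (i : Fin d) (b : Br d k) :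
    IsParentC d k none (some (i, b)) ↔ (b.1 : ℕ) = 0 := by
  obtain ⟨m, g⟩ := b
  exact Iff.rfl

lemma isParentC_none' {d k : ℕ} (w : TreeBallC d k) :
    ¬ IsParentC d k w none := by
  cases w <;> exact not_false

lemma isParentE_mk {d k : ℕ} (e e' : Fin 2) (b b' : Br d k) :
    IsParentE d k (e, b) (e', b') ↔ (e = e' ∧ IsParentBr d k b b') := by
  obtain ⟨m, g⟩ := b; obtain ⟨m', g'⟩ := b'
  exact Iff.rfl

def b0 (d k : ℕ) : Br d k := ⟨⟨0, Nat.succ_pos k⟩, Fin.elim0⟩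

lemma br_eq_b0 {d k : ℕ} (b : Br d k) (h : (b.1 : ℕ) = 0) : b = b0 d k := by
  obtain ⟨⟨mv, hmv⟩, g⟩ := b
  dsimp only [Fin.val_mk] at h
  subst h
  unfold b0
  simp only [Sigma.mk.inj_iff, Fin.mk.injEq, heq_eq_eq, true_and]
  funext x
  exact x.elim0

lemma chld_inj {d k : ℕ} {b : Br d k} {hb : (b.1 : ℕ) < k} :
    Function.Injective (chld b hb) := by
  intro j j' h
  unfold chld at h
  rw [Sigma.mk.inj_iff] at h
  obtain ⟨-, h2⟩ := h
  have h3 : (Fin.snoc b.2 j : Fin ((b.1:ℕ)+1) → Fin (d-1)) = Fin.snoc b.2 j' := eq_of_heq h2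
  have h4 := congrFun h3 (Fin.last _)
  rwa [Fin.snoc_last, Fin.snoc_last] at h4

lemma chld_fst {d k : ℕ} (b : Br d k) (hb : (b.1 : ℕ) < k) (j : Fin (d - 1)) :
    ((chld b hb j).1 : ℕ) = (b.1 : ℕ) + 1 := rfl

lemma filterC_root {d k : ℕ} :
    Finset.univ.filter (fun w => AdjC d k none w)
      = Finset.univ.image (fun i : Fin d => some (i, b0 d k)) := by
  ext w
  simp only [Finset.mem_filter, Finset.mem_univ, true_and, Finset.mem_image]
  constructor
  · rintro (h | h)
    · match w with
      | none => exact absurd h (isParentC_none' _)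
      | some (i, b) =>
        rw [isParentC_none_some] at h
        exact ⟨i, by rw [br_eq_b0 b h]⟩
    · exact absurd h (isParentC_none' _)
  · rintro ⟨i, rfl⟩
    left
    rw [isParentC_none_some]
    rfl

def parC {d k : ℕ} (i : Fin d) (b : Br d k) : TreeBallC d k :=
  if (b.1 : ℕ) = 0 then none else some (i, par b)

lemma filterC_node {d k : ℕ} (i : Fin d) (b : Br d k) (hb : (b.1 : ℕ) < k) :
    Finset.univ.filter (fun w => AdjC d k (some (i, b)) w)
      = insert (parC i b) (Finset.univ.image (fun j => some (i, chld b hb j))) := by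
  ext w
  simp only [Finset.mem_filter, Finset.mem_univ, true_and, Finset.mem_insert, Finset.mem_image]
  constructor
  · rintro (h | h)
    · match w with
      | none => exact absurd h (isParentC_none' _)
      | some (i', b') =>
        rw [isParentC_some_some] at h
        obtain ⟨rfl, hbr⟩ := h
        obtain ⟨j, rfl⟩ := (isParentBr_iff b b' hb).1 hbr
        exact Or.inr ⟨j, rfl⟩
    · match w with
      | none =>
        rw [isParentC_none_some] at h
        left
        rw [parC, if_pos h]
      | some (i', b') =>
        rw [isParentC_some_some] at h
        obtain ⟨rfl, hbr⟩ := h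
        obtain ⟨h0, rfl⟩ := (isParentBr_iff' b b').1 hbr
        left
        rw [parC, if_neg h0]
  · rintro (rfl | ⟨j, rfl⟩)
    · rw [parC]
      split_ifs with h0
      · exact Or.inr ((isParentC_none_some i b).2 h0)
      · exact Or.inr ((isParentC_some_some i i (par b) b).2 ⟨rfl, (isParentBr_iff' b _).2 ⟨h0, rfl⟩⟩)
    · left
      rw [isParentC_some_some]
      exact ⟨rfl, (isParentBr_iff b _ hb).2 ⟨j, rfl⟩⟩

def lvlC {d k : ℕ} : TreeBallC d k → ℕ
  | none => 0
  | some (_, b) => (b.1 : ℕ) + 1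

lemma sumC_root {d k : ℕ} (f : TreeBallC d k → ℝ) :
    ∑ w ∈ Finset.univ.filter (fun w => AdjC d k none w), f w
      = ∑ i : Fin d, f (some (i, b0 d k)) := by
  rw [filterC_root, Finset.sum_image]
  intro i _ i' _ h
  simpa using h

lemma sumC_node {d k : ℕ} (f : TreeBallC d k → ℝ) (i : Fin d) (b : Br d k)
    (hb : (b.1 : ℕ) < k) :
    ∑ w ∈ Finset.univ.filter (fun w => AdjC d k (some (i, b)) w), f w
      = f (parC i b) + ∑ j : Fin (d - 1), f (some (i, chld b hb j)) := by
  rw [filterC_node i b hb, Finset.sum_insert, Finset.sum_image]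
  · intro j _ j' _ h
    exact chld_inj (by simpa using h)
  · simp only [Finset.mem_image, Finset.mem_univ, true_and, not_exists]
    intro j h
    have hl := congrArg lvlC h
    rw [parC] at hl
    split_ifs at hl with h0
    · simp only [lvlC, chld_fst] at hl
      omega
    · simp only [lvlC, chld_fst] at hl
      have : ((par b).1 : ℕ) = (b.1 : ℕ) - 1 := rfl
      omega

def othE (e : Fin 2) : Fin 2 := ⟨1 - (e : ℕ), by omega⟩

lemma othE_ne (e : Fin 2) : e ≠ othE e := by
  intro h
  have := congrArg Fin.val h
  have h2 := e.isLt
  simp only [othE] at this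
  omega

def parE {d k : ℕ} (e : Fin 2) (b : Br d k) : TreeBallE d k :=
  if (b.1 : ℕ) = 0 then (othE e, b0 d k) else (e, par b)

lemma filterE_node {d k : ℕ} (e : Fin 2) (b : Br d k) (hb : (b.1 : ℕ) < k) :
    Finset.univ.filter (fun w => AdjE d k (e, b) w)
      = insert (parE e b) (Finset.univ.image (fun j => (e, chld b hb j))) := by
  ext w
  obtain ⟨e', b'⟩ := w
  simp only [Finset.mem_filter, Finset.mem_univ, true_and, Finset.mem_insert, Finset.mem_image]
  constructor
  · rintro (h | h | ⟨h1, h2, h3⟩)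
    · rw [isParentE_mk] at h
      obtain ⟨rfl, hbr⟩ := h
      obtain ⟨j, rfl⟩ := (isParentBr_iff b b' hb).1 hbr
      exact Or.inr ⟨j, rfl⟩
    · rw [isParentE_mk] at h
      obtain ⟨rfl, hbr⟩ := h
      obtain ⟨h0, rfl⟩ := (isParentBr_iff' b b').1 hbr
      left
      rw [parE, if_neg h0]
    · left
      rw [parE, if_pos h1]
      have he : e' = othE e := by
        have hv : (e : ℕ) ≠ (e' : ℕ) := fun hv => h3 (Fin.ext hv)
        have l1 := e.isLt
        have l2 := e'.isLt
        exact Fin.ext (by simp only [othE]; omega)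
      rw [he, br_eq_b0 b' h2]
  · rintro (h | ⟨j, h⟩)
    · rw [parE] at h
      split_ifs at h with h0
      · obtain ⟨h1, h2⟩ := Prod.mk.injEq .. ▸ h
        rw [h1, h2]
        exact Or.inr (Or.inr ⟨h0, rfl, othE_ne e⟩)
      · obtain ⟨h1, h2⟩ := Prod.mk.injEq .. ▸ h
        rw [h1, h2]
        exact Or.inr (Or.inl ((isParentE_mk e e (par b) b).2 ⟨rfl, (isParentBr_iff' b _).2 ⟨h0, rfl⟩⟩))
    · rw [← h]
      exact Or.inl ((isParentE_mk e e b (chld b hb j)).2 ⟨rfl, (isParentBr_iff b _ hb).2 ⟨j, rfl⟩⟩)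

lemma sumE_node {d k : ℕ} (f : TreeBallE d k → ℝ) (e : Fin 2) (b : Br d k)
    (hb : (b.1 : ℕ) < k) :
    ∑ w ∈ Finset.univ.filter (fun w => AdjE d k (e, b) w), f w
      = f (parE e b) + ∑ j : Fin (d - 1), f (e, chld b hb j) := by
  rw [filterE_node e b hb, Finset.sum_insert, Finset.sum_image]
  · intro j _ j' _ h
    exact chld_inj (by simpa using h)
  · simp only [Finset.mem_image, Finset.mem_univ, true_and, not_exists]
    intro j h
    have hl := congrArg (fun w : TreeBallE d k => (w.2.1 : ℕ)) h
    rw [parE] at hl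
    split_ifs at hl with h0
    · simp only [chld_fst] at hl
      have : ((b0 d k).1 : ℕ) = 0 := rfl
      omega
    · simp only [chld_fst] at hl
      have : ((par b).1 : ℕ) = (b.1 : ℕ) - 1 := rfl
      omega

abbrev BrI (d k : ℕ) := Σ m : Fin k, (Fin (m : ℕ) → Fin (d - 1))
abbrev IC (d k : ℕ) := Option (Fin d × BrI d k)
abbrev IE (d k : ℕ) := Fin 2 × BrI d k

def emb {d k : ℕ} (b : BrI d k) : Br d k := ⟨⟨(b.1 : ℕ), by have := b.1.isLt; omega⟩, b.2⟩

lemma emb_lt {d k : ℕ} (b : BrI d k) : ((emb b).1 : ℕ) < k := b.1.isLt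

def iotaC {d k : ℕ} : IC d k → TreeBallC d k
  | none => none
  | some (i, b) => some (i, emb b)

def iotaE {d k : ℕ} : IE d k → TreeBallE d k
  | (e, b) => (e, emb b)

lemma interiorC_iff {d k : ℕ} (v : TreeBallC d k) :
    InteriorC d k v ↔ ∃ x : IC d k, iotaC x = v := by
  constructor
  · intro hv
    match v with
    | none => exact ⟨none, rfl⟩
    | some (i, ⟨⟨mv, hmv⟩, gf⟩) =>
      have h : mv < k := hv
      exact ⟨some (i, ⟨⟨mv, h⟩, gf⟩), rfl⟩
  · rintro ⟨x, rfl⟩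
    match x with
    | none => trivial
    | some (i, ⟨⟨mv, hmv⟩, gf⟩) =>
      show mv < k
      exact hmv

lemma interiorE_iff {d k : ℕ} (v : TreeBallE d k) :
    InteriorE d k v ↔ ∃ x : IE d k, iotaE x = v := by
  constructor
  · intro hv
    obtain ⟨e, ⟨⟨mv, hmv⟩, gf⟩⟩ := v
    have h : mv < k := hv
    exact ⟨(e, ⟨⟨mv, h⟩, gf⟩), rfl⟩
  · rintro ⟨⟨e, ⟨⟨mv, hmv⟩, gf⟩⟩, rfl⟩
    show mv < k
    exact hmv

noncomputable def LC (d k : ℕ) (lam : ℝ) : (TreeBallC d k → ℝ) →ₗ[ℝ] (IC d k → ℝ) where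
  toFun f := fun x =>
    lam * f (iotaC x) - ∑ w ∈ Finset.univ.filter (fun w => AdjC d k (iotaC x) w), f w
  map_add' f g := by
    funext x
    simp only [Pi.add_apply, Finset.sum_add_distrib]
    ring
  map_smul' c f := by
    funext x
    simp only [Pi.smul_apply, smul_eq_mul, RingHom.id_apply, ← Finset.mul_sum]
    ring

noncomputable def LE' (d k : ℕ) (lam : ℝ) : (TreeBallE d k → ℝ) →ₗ[ℝ] (IE d k → ℝ) where
  toFun f := fun x =>
    lam * f (iotaE x) - ∑ w ∈ Finset.univ.filter (fun w => AdjE d k (iotaE x) w), f w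
  map_add' f g := by
    funext x
    simp only [Pi.add_apply, Finset.sum_add_distrib]
    ring
  map_smul' c f := by
    funext x
    simp only [Pi.smul_apply, smul_eq_mul, RingHom.id_apply, ← Finset.mul_sum]
    ring

lemma ker_LC (d k : ℕ) (lam : ℝ) : LinearMap.ker (LC d k lam) = WlamC d k lam := by
  ext f
  constructor
  · intro hf v hv
    obtain ⟨x, rfl⟩ := (interiorC_iff v).1 hv
    have h2 : LC d k lam f = 0 := hf
    have h3 := congrFun h2 x
    show lam * f (iotaC x) = _
    simp only [LC, LinearMap.coe_mk, AddHom.coe_mk, Pi.zero_apply] at h3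
    linarith
  · intro hf
    show LC d k lam f = 0
    funext x
    have h3 := hf (iotaC x) ((interiorC_iff (iotaC x)).2 ⟨x, rfl⟩)
    simp only [LC, LinearMap.coe_mk, AddHom.coe_mk, Pi.zero_apply]
    linarith

lemma ker_LE (d k : ℕ) (lam : ℝ) : LinearMap.ker (LE' d k lam) = WlamE d k lam := by
  ext f
  constructor
  · intro hf v hv
    obtain ⟨x, rfl⟩ := (interiorE_iff v).1 hv
    have h2 : LE' d k lam f = 0 := hf
    have h3 := congrFun h2 x
    show lam * f (iotaE x) = _
    simp only [LE', LinearMap.coe_mk, AddHom.coe_mk, Pi.zero_apply] at h3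
    linarith
  · intro hf
    show LE' d k lam f = 0
    funext x
    have h3 := hf (iotaE x) ((interiorE_iff (iotaE x)).2 ⟨x, rfl⟩)
    simp only [LE', LinearMap.coe_mk, AddHom.coe_mk, Pi.zero_apply]
    linarith

noncomputable def GC {d k : ℕ} (g : IC d k → ℝ) (i : Fin d) :
    (m : ℕ) → (Fin m → Fin (d - 1)) → ℝ :=
  fun m gf => if h : m < k then g (some (i, ⟨⟨m, h⟩, gf⟩)) else 0

noncomputable def fC (d k : ℕ) (lam : ℝ) (g : IC d k → ℝ) : TreeBallC d k → ℝ
  | none => 0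
  | some (i, b) =>
      Fb d lam 0 (if (i : ℕ) = 0 then -(g none) else 0) (GC g i) (b.1 : ℕ) b.2

lemma LC_surj (d k : ℕ) (hd : 3 ≤ d) (lam : ℝ) : Function.Surjective (LC d k lam) := by
  intro g
  refine ⟨fC d k lam g, ?_⟩
  funext x
  show lam * fC d k lam g (iotaC x)
      - ∑ w ∈ Finset.univ.filter (fun w => AdjC d k (iotaC x) w), fC d k lam g w = g x
  match x with
  | none =>
    rw [show iotaC (none : IC d k) = none from rfl, sumC_root]
    have hterm : ∀ i : Fin d, fC d k lam g (some (i, b0 d k))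
        = if (i : ℕ) = 0 then -(g none) else 0 := fun i => rfl
    simp only [hterm]
    rw [show fC d k lam g none = 0 from rfl]
    have hsum : ∑ x : Fin d, (if (x : ℕ) = 0 then -g none else 0) = -g none := by
      rw [Finset.sum_eq_single_of_mem (⟨0, by omega⟩ : Fin d) (Finset.mem_univ _)]
      · simp
      · intro j _ hj
        rw [if_neg]
        intro hv
        exact hj (Fin.ext hv)
    rw [hsum]
    ring
  | some (i, bI) =>
    obtain ⟨⟨mv, hmv⟩, gf⟩ := bI
    rw [show iotaC (some (i, ⟨⟨mv, hmv⟩, gf⟩)) = some (i, emb ⟨⟨mv, hmv⟩, gf⟩) from rfl]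
    rw [sumC_node _ i _ (emb_lt _)]
    set r0 := if (i : ℕ) = 0 then -(g none) else 0 with hr0
    have h1 : fC d k lam g (some (i, emb ⟨⟨mv, hmv⟩, gf⟩)) = Fb d lam 0 r0 (GC g i) mv gf := rfl
    have h2 : ∀ j, fC d k lam g (some (i, chld (emb ⟨⟨mv, hmv⟩, gf⟩) (emb_lt _) j))
        = Fb d lam 0 r0 (GC g i) (mv + 1) (Fin.snoc gf j) := fun j => rfl
    have h3 : fC d k lam g (parC i (emb ⟨⟨mv, hmv⟩, gf⟩)) = FbP d lam 0 r0 (GC g i) mv gf := by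
      rw [parC]
      match mv, hmv, gf with
      | 0, hmv, gf =>
        rw [if_pos (show ((emb (⟨⟨0, hmv⟩, gf⟩ : BrI d k)).1 : ℕ) = 0 from rfl)]
        rfl
      | (n + 1), hmv, gf =>
        rw [if_neg (show ¬ ((emb (⟨⟨n + 1, hmv⟩, gf⟩ : BrI d k)).1 : ℕ) = 0 from Nat.succ_ne_zero n)]
        rfl
    rw [h1, h3]
    simp only [h2]
    have hkey := Fb_key d hd lam 0 r0 (GC g i) mv gf
    have : lam * Fb d lam 0 r0 (GC g i) mv gf -
        (FbP d lam 0 r0 (GC g i) mv gf + ∑ j : Fin (d-1), Fb d lam 0 r0 (GC g i) (mv + 1) (Fin.snoc gf j))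
        = GC g i mv gf := by linarith
    rw [this, GC, dif_pos hmv]

noncomputable def GE {d k : ℕ} (g : IE d k → ℝ) (e : Fin 2) :
    (m : ℕ) → (Fin m → Fin (d - 1)) → ℝ :=
  fun m gf => if h : m < k then g (e, ⟨⟨m, h⟩, gf⟩) else 0

noncomputable def fE (d k : ℕ) (lam : ℝ) (g : IE d k → ℝ) : TreeBallE d k → ℝ
  | (e, b) => Fb d lam 0 0 (GE g e) (b.1 : ℕ) b.2

lemma LE_surj (d k : ℕ) (hd : 3 ≤ d) (lam : ℝ) : Function.Surjective (LE' d k lam) := by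
  intro g
  refine ⟨fE d k lam g, ?_⟩
  funext x
  show lam * fE d k lam g (iotaE x)
      - ∑ w ∈ Finset.univ.filter (fun w => AdjE d k (iotaE x) w), fE d k lam g w = g x
  obtain ⟨e, bI⟩ := x
  obtain ⟨⟨mv, hmv⟩, gf⟩ := bI
  rw [show iotaE ((e, ⟨⟨mv, hmv⟩, gf⟩) : IE d k) = (e, emb ⟨⟨mv, hmv⟩, gf⟩) from rfl]
  rw [sumE_node _ e _ (emb_lt _)]
  have h1 : fE d k lam g (e, emb ⟨⟨mv, hmv⟩, gf⟩) = Fb d lam 0 0 (GE g e) mv gf := rfl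
  have h2 : ∀ j, fE d k lam g (e, chld (emb ⟨⟨mv, hmv⟩, gf⟩) (emb_lt _) j)
      = Fb d lam 0 0 (GE g e) (mv + 1) (Fin.snoc gf j) := fun j => rfl
  have h3 : fE d k lam g (parE e (emb ⟨⟨mv, hmv⟩, gf⟩)) = FbP d lam 0 0 (GE g e) mv gf := by
    rw [parE]
    match mv, hmv, gf with
    | 0, hmv, gf =>
      rw [if_pos (show ((emb (⟨⟨0, hmv⟩, gf⟩ : BrI d k)).1 : ℕ) = 0 from rfl)]
      rfl
    | (n + 1), hmv, gf =>
      rw [if_neg (show ¬ ((emb (⟨⟨n + 1, hmv⟩, gf⟩ : BrI d k)).1 : ℕ) = 0 from Nat.succ_ne_zero n)]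
      rfl
  rw [h1, h3]
  simp only [h2]
  have hkey := Fb_key d hd lam 0 0 (GE g e) mv gf
  have : lam * Fb d lam 0 0 (GE g e) mv gf -
      (FbP d lam 0 0 (GE g e) mv gf + ∑ j : Fin (d-1), Fb d lam 0 0 (GE g e) (mv + 1) (Fin.snoc gf j))
      = GE g e mv gf := by linarith
  rw [this, GE, dif_pos hmv]

lemma card_Br (d k : ℕ) :
    Fintype.card (Br d k) = ∑ m ∈ Finset.range (k + 1), (d - 1) ^ m := by
  rw [Fintype.card_sigma]
  rw [← Fin.sum_univ_eq_sum_range (fun m => (d - 1) ^ m) (k + 1)]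
  congr 1
  funext m
  simp [Fintype.card_fun]

lemma card_BrI (d k : ℕ) :
    Fintype.card (BrI d k) = ∑ m ∈ Finset.range k, (d - 1) ^ m := by
  rw [Fintype.card_sigma]
  rw [← Fin.sum_univ_eq_sum_range (fun m => (d - 1) ^ m) k]
  congr 1
  funext m
  simp [Fintype.card_fun]

lemma finrank_ker_eq (d k : ℕ) (lam : ℝ) {V I : Type} [Fintype V] [Fintype I]
    (L : (V → ℝ) →ₗ[ℝ] (I → ℝ)) (hs : Function.Surjective L) :
    Module.finrank ℝ (LinearMap.ker L) + Fintype.card I = Fintype.card V := by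
  have h1 := LinearMap.finrank_range_add_finrank_ker L
  rw [LinearMap.range_eq_top.2 hs] at h1
  rw [finrank_top] at h1
  rw [Module.finrank_fintype_fun_eq_card] at h1
  rw [Module.finrank_fintype_fun_eq_card] at h1
  omega

end Aux

/-- `dim W_λ(B_k(C)) = d(d−1)^k` and `dim W_λ(B_k(e)) = 2(d−1)^k`: the dimension of the
space of solutions of the eigenvector equation on a tree ball equals the number of
boundary vertices, for every `λ ∈ ℝ`. -/
theorem dim_eigenvector_subspace_tree_balls (d k : ℕ) (hd : 3 ≤ d) (lam : ℝ) :
    Module.finrank ℝ (WlamC d k lam) = d * (d - 1) ^ k ∧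
    Module.finrank ℝ (WlamE d k lam) = 2 * (d - 1) ^ k := by
  have hC := finrank_ker_eq d k lam (LC d k lam) (LC_surj d k hd lam)
  have hE := finrank_ker_eq d k lam (LE' d k lam) (LE_surj d k hd lam)
  rw [ker_LC] at hC
  rw [ker_LE] at hE
  have hcV : Fintype.card (TreeBallC d k)
      = d * (∑ m ∈ Finset.range (k + 1), (d - 1) ^ m) + 1 := by
    rw [show Fintype.card (TreeBallC d k)
        = Fintype.card (Fin d × Br d k) + 1 from Fintype.card_option]
    rw [Fintype.card_prod, card_Br, Fintype.card_fin]
  have hcI : Fintype.card (IC d k)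
      = d * (∑ m ∈ Finset.range k, (d - 1) ^ m) + 1 := by
    rw [show Fintype.card (IC d k)
        = Fintype.card (Fin d × BrI d k) + 1 from Fintype.card_option]
    rw [Fintype.card_prod, card_BrI, Fintype.card_fin]
  have hcVE : Fintype.card (TreeBallE d k)
      = 2 * (∑ m ∈ Finset.range (k + 1), (d - 1) ^ m) := by
    rw [show Fintype.card (TreeBallE d k)
        = Fintype.card (Fin 2) * Fintype.card (Br d k) from Fintype.card_prod _ _]
    rw [card_Br, Fintype.card_fin]
  have hcIE : Fintype.card (IE d k)
      = 2 * (∑ m ∈ Finset.range k, (d - 1) ^ m) := by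
    rw [show Fintype.card (IE d k)
        = Fintype.card (Fin 2) * Fintype.card (BrI d k) from Fintype.card_prod _ _]
    rw [card_BrI, Fintype.card_fin]
  have hstep : ∑ m ∈ Finset.range (k + 1), (d - 1) ^ m
      = (∑ m ∈ Finset.range k, (d - 1) ^ m) + (d - 1) ^ k := Finset.sum_range_succ _ _
  constructor
  · rw [hcV, hcI, hstep] at hC
    have := Nat.mul_add d (∑ m ∈ Finset.range k, (d - 1) ^ m) ((d - 1) ^ k)
    omega
  · rw [hcVE, hcIE, hstep] at hE
    have := Nat.mul_add 2 (∑ m ∈ Finset.range k, (d - 1) ^ m) ((d - 1) ^ k)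
    omega
end
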